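/- For any set A ⊆ ℕ, A computes a function f with W_{f(n)} ≠ W_n for all n if and only if A computes a function g with φ_{g(e)} ≠ φ_e for all e. -/

import Mathlib

open Part

/-- The `n`-th partial computable function in a standard numbering. -/
def phi (n : ℕ) : ℕ →. ℕ := (Denumerable.ofNat Nat.Partrec.Code n).eval

/-- `W n` is the domain of the `n`-th partial computable function. -/
def Wdom (n : ℕ) : Set ℕ := {x | (phi n x).Dom}

/-- Partial functions computable relative to a partial oracle `O`. -/
inductive RecursiveInOracle (O : ℕ →. ℕ) : (ℕ →. ℕ) → Prop
  | oracle : RecursiveInOracle O O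
  | zero : RecursiveInOracle O (pure 0)
  | succ : RecursiveInOracle O Nat.succ
  | left : RecursiveInOracle O ↑fun n : ℕ => n.unpair.1
  | right : RecursiveInOracle O ↑fun n : ℕ => n.unpair.2
  | pair {f g} : RecursiveInOracle O f → RecursiveInOracle O g →
      RecursiveInOracle O fun n => Nat.pair <$> f n <*> g n
  | comp {f g} : RecursiveInOracle O f → RecursiveInOracle O g →
      RecursiveInOracle O fun n => g n >>= f
  | prec {f g} : RecursiveInOracle O f → RecursiveInOracle O g →
      RecursiveInOracle O (Nat.unpaired fun a n =>
        n.rec (f a) fun y IH => do let i ← IH; g (Nat.pair a (Nat.pair y i)))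
  | rfind {f} : RecursiveInOracle O f →
      RecursiveInOracle O fun a => Nat.rfind fun n => (fun m => m = 0) <$> f (Nat.pair a n)

open Classical in
/-- The characteristic function of a set `A` as a partial oracle. -/
noncomputable def chi (A : Set ℕ) : ℕ →. ℕ := fun n => Part.some (if n ∈ A then 1 else 0)

/-- A total function is computable relative to the set `A`. -/
def ComputableInSet (A : Set ℕ) (f : ℕ → ℕ) : Prop := RecursiveInOracle (chi A) ↑f

/-- A partial function is computable relative to the set `A`. -/
def PartComputableInSet (A : Set ℕ) (f : ℕ →. ℕ) : Prop := RecursiveInOracle (chi A) f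

/-- Turing reducibility between sets of naturals. -/
def TuringLe (A B : Set ℕ) : Prop := RecursiveInOracle (chi B) (chi A)

/-- The halting set ∅′. -/
def K0 : Set ℕ := {n | (phi n n).Dom}

/-- `A` is computably enumerable. -/
def CE (A : Set ℕ) : Prop := REPred (· ∈ A)

/-!
The forward direction is immediate, since `W_{f n} ≠ W_n` forces `φ_{f n} ≠ φ_n`. Conversely,
let `c e` be an index with `W_{c e}` the graph of `φ_e`, and let `d n` be an index of a
uniformization of `W_n`, read as a binary relation, found by dovetailing. Put
`f n = c (g (d n))`. If `W_{f n} = W_n`, then `W_n` is the graph of `φ_{g (d n)}`, which is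
single-valued, so its uniformization `φ_{d n}` is `φ_{g (d n)}` itself, contradicting the choice
of `g`.
-/

open Nat.Partrec

theorem RecursiveInOracle.of_partrec {O f : ℕ →. ℕ} (h : Nat.Partrec f) :
    RecursiveInOracle O f := by
  induction h with
  | zero => exact .zero
  | succ => exact .succ
  | left => exact .left
  | right => exact .right
  | pair _ _ ihf ihg => exact .pair ihf ihg
  | comp _ _ ihf ihg => exact .comp ihf ihg
  | prec _ _ ihf ihg => exact .prec ihf ihg
  | rfind _ ih => exact .rfind ih

theorem ComputableInSet.of_computable (A : Set ℕ) {f : ℕ → ℕ} (hf : Computable f) :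
    ComputableInSet A f :=
  .of_partrec (Partrec.nat_iff.1 hf)

theorem ComputableInSet.comp {A : Set ℕ} {f g : ℕ → ℕ} (hf : ComputableInSet A f)
    (hg : ComputableInSet A g) : ComputableInSet A (f ∘ g) := by
  have hbind : (↑(f ∘ g) : ℕ →. ℕ) = fun n => (g : ℕ →. ℕ) n >>= (f : ℕ →. ℕ) :=
    funext fun n => (Part.bind_some (g n) fun x => Part.some (f x)).symm
  unfold ComputableInSet
  rw [hbind]
  exact .comp hf hg

theorem partrec₂_phi : Partrec₂ phi :=
  Code.eval_part.comp ((Computable.ofNat _).comp .fst) .snd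

theorem phi_encode (c : Code) : phi (Encodable.encode c) = c.eval := by
  simp [phi]

/-- The s-m-n theorem for the numbering `phi`. -/
theorem exists_computable_index {f : ℕ → ℕ →. ℕ} (hf : Partrec₂ f) :
    ∃ s : ℕ → ℕ, Computable s ∧ ∀ a, phi (s a) = f a := by
  obtain ⟨c, hc⟩ := Code.exists_code.1 (Partrec.nat_iff.1
    (hf.comp (Computable.fst.comp .unpair) (Computable.snd.comp .unpair)))
  refine ⟨fun a => Encodable.encode (c.curry a),
    Computable.encode.comp
      (Code.primrec₂_curry.comp (Primrec.const c) Primrec.id).to_comp, fun a => ?_⟩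
  funext x
  simp [phi_encode, Code.eval_curry, hc]

def codedGraph (f : ℕ →. ℕ) : Set ℕ := {p | p.unpair.2 ∈ f p.unpair.1}

theorem exists_computable_Wdom_eq_codedGraph :
    ∃ s : ℕ → ℕ, Computable s ∧ ∀ e, Wdom (s e) = codedGraph (phi e) := by
  let check : ℕ → ℕ →. ℕ := fun e p =>
    (phi e p.unpair.1).bind fun v => Part.ofOption (if v = p.unpair.2 then some 0 else none)
  have hcheck : Partrec₂ check := by
    have hv : Primrec₂ fun (q : ℕ × ℕ) (v : ℕ) =>
        (if v = q.2.unpair.2 then some 0 else none : Option ℕ) :=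
      Primrec.ite (PrimrecRel.comp Primrec.eq Primrec.snd
          (Primrec.snd.comp (Primrec.unpair.comp (Primrec.snd.comp Primrec.fst))))
        (Primrec.const _) (Primrec.const _)
    exact (partrec₂_phi.comp Computable.fst (Computable.fst.comp
      (Computable.unpair.comp Computable.snd))).bind (Computable.ofOption hv.to_comp).to₂
  obtain ⟨s, hs, hphi⟩ := exists_computable_index hcheck
  refine ⟨s, hs, fun e => Set.ext fun p => ?_⟩
  simp only [Wdom, codedGraph, Set.mem_ofPred_eq, hphi, check, Part.bind_dom]
  constructor
  · rintro ⟨hdom, hv⟩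
    by_cases h : (phi e p.unpair.1).get hdom = p.unpair.2
    · exact h ▸ Part.get_mem hdom
    · simp [h] at hv
  · intro hp
    refine ⟨Part.dom_iff_mem.2 ⟨_, hp⟩, ?_⟩
    simp [Part.get_eq_of_mem hp]

theorem exists_computable_uniformization :
    ∃ s : ℕ → ℕ, Computable s ∧ ∀ n x,
      (∀ y ∈ phi (s n) x, Nat.pair x y ∈ Wdom n) ∧
      ((∃ y, Nat.pair x y ∈ Wdom n) → (phi (s n) x).Dom) := by
  -- Stage `k` checks whether the candidate `k.unpair.1` puts `⟪x, k.unpair.1⟫` into `W n`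
  -- within `k.unpair.2` steps.
  let attempt : ℕ × ℕ → ℕ → Option ℕ := fun q k =>
    (Code.evaln k.unpair.2 (Denumerable.ofNat Code q.1) (Nat.pair q.2 k.unpair.1)).map
      fun _ => k.unpair.1
  have hattempt : Computable₂ attempt := by
    refine Primrec.to_comp (Primrec.option_map (Code.primrec_evaln.comp
      (((Primrec.snd.comp (Primrec.unpair.comp Primrec.snd)).pair
        ((Primrec.ofNat _).comp (Primrec.fst.comp Primrec.fst))).pair
      (Primrec₂.natPair.comp (Primrec.snd.comp Primrec.fst)
        (Primrec.fst.comp (Primrec.unpair.comp Primrec.snd))))) ?_)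
    exact (Primrec.fst.comp (Primrec.unpair.comp (Primrec.snd.comp Primrec.fst))).to₂
  obtain ⟨s, hs, hphi⟩ :=
    exists_computable_index (Partrec.rfindOpt hattempt).to₂
  refine ⟨s, hs, fun n x => ⟨fun y hy => ?_, fun ⟨y, hy⟩ => ?_⟩⟩
  · rw [hphi] at hy
    obtain ⟨k, hk⟩ := Nat.rfindOpt_spec hy
    obtain ⟨v, hv, rfl⟩ := Option.map_eq_some_iff.1 hk
    exact Part.dom_iff_mem.2 ⟨v, Code.evaln_sound hv⟩
  · obtain ⟨v, hv⟩ := Part.dom_iff_mem.1 hy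
    obtain ⟨k, hk⟩ := Code.evaln_complete.1 hv
    rw [hphi]
    refine Nat.rfindOpt_dom.2 ⟨Nat.pair y k, y, ?_⟩
    simp only [attempt, Nat.unpair_pair, Option.mem_def, Option.map_eq_some_iff]
    exact ⟨v, hk, trivial⟩

theorem Part.eq_of_mem_imp_of_dom_imp {α : Type*} {p q : Part α} (hmem : ∀ y ∈ p, y ∈ q)
    (hdom : q.Dom → p.Dom) : p = q := by
  refine Part.ext fun y => ⟨hmem y, fun hy => ?_⟩
  have hp := Part.get_mem (hdom (Part.dom_iff_mem.2 ⟨y, hy⟩))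
  rwa [Part.mem_unique hy (hmem _ hp)]

theorem eq_of_uniformizes_codedGraph {ψ f : ℕ →. ℕ}
    (hmem : ∀ x, ∀ y ∈ ψ x, Nat.pair x y ∈ codedGraph f)
    (hdom : ∀ x, (∃ y, Nat.pair x y ∈ codedGraph f) → (ψ x).Dom) : ψ = f := by
  simp only [codedGraph, Set.mem_ofPred_eq, Nat.unpair_pair] at hmem hdom
  exact funext fun x => Part.eq_of_mem_imp_of_dom_imp (hmem x)
    fun hx => hdom x (Part.dom_iff_mem.1 hx)

theorem fpf_iff_ext_fpf (A : Set ℕ) :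
    (∃ f : ℕ → ℕ, ComputableInSet A f ∧ ∀ n, Wdom (f n) ≠ Wdom n) ↔
    (∃ g : ℕ → ℕ, ComputableInSet A g ∧ ∀ e, phi (g e) ≠ phi e) := by
  refine ⟨fun ⟨f, hf, hW⟩ => ⟨f, hf, fun e h => hW e (by rw [Wdom, Wdom, h])⟩, ?_⟩
  rintro ⟨g, hg, hphi⟩
  obtain ⟨c, hc, hWc⟩ := exists_computable_Wdom_eq_codedGraph
  obtain ⟨d, hd, hdW⟩ := exists_computable_uniformization
  refine ⟨c ∘ g ∘ d, (ComputableInSet.of_computable A hc).comp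
    (hg.comp (ComputableInSet.of_computable A hd)), fun n hW => hphi (d n) ?_⟩
  have hWn : Wdom n = codedGraph (phi (g (d n))) := hW ▸ hWc _
  exact (eq_of_uniformizes_codedGraph (fun x => hWn ▸ (hdW n x).1)
    (fun x => hWn ▸ (hdW n x).2)).symm
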